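/- Let A be a Hopf algebra, P a right A-comodule algebra, and Φ : A → P a convolution-invertible linear map with Δ_R ∘ Φ = (Φ ⊗ id) ∘ Δ. Then the convolution inverse satisfies Δ_R ∘ Φ⁻¹ = (Φ⁻¹ ⊗ S) ∘ τ ∘ Δ, i.e. Δ_R(Φ⁻¹(a)) = Φ⁻¹(a₍₂₎) ⊗ S(a₍₁₎). -/
import Mathlib


open TensorProduct

variable (k : Type*) [Field k] {A P : Type*} [Ring A] [HopfAlgebra k A]
  [Ring P] [Algebra k P]

/-- Convolution of linear maps `A → P`: `(f * g)(a) = f(a₍₁₎) g(a₍₂₎)`. -/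
noncomputable def conv (f g : A →ₗ[k] P) : A →ₗ[k] P :=
  (LinearMap.mul' k P) ∘ₗ (TensorProduct.map f g) ∘ₗ (Coalgebra.comul (R := k) (A := A))

/-- The convolution unit `η_P ∘ ε`. -/
noncomputable def convUnit : A →ₗ[k] P :=
  (Algebra.linearMap k P) ∘ₗ (Coalgebra.counit (R := k) (A := A))

section tool
variable {B C : Type*} [Ring B] [Algebra k B] [Ring C] [Algebra k C]

lemma mul_assoc_tensor (f g h : A →ₗ[k] B) :
    ((LinearMap.mul' k B) ∘ₗ TensorProduct.map (LinearMap.mul' k B) LinearMap.id)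
      ∘ₗ TensorProduct.map (TensorProduct.map f g) h
    = (((LinearMap.mul' k B) ∘ₗ TensorProduct.map LinearMap.id (LinearMap.mul' k B))
      ∘ₗ TensorProduct.map f (TensorProduct.map g h))
      ∘ₗ (TensorProduct.assoc k A A A).toLinearMap := by
  apply TensorProduct.ext_threefold
  intro a b c
  simp [mul_assoc]

lemma conv_assoc (f g h : A →ₗ[k] B) :
    conv k (conv k f g) h = conv k f (conv k g h) := by
  have e1 : TensorProduct.map (LinearMap.mul' k B ∘ₗ TensorProduct.map f g ∘ₗ (Coalgebra.comul (R := k) (A := A))) h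
      = TensorProduct.map (LinearMap.mul' k B) LinearMap.id
        ∘ₗ TensorProduct.map (TensorProduct.map f g) h
        ∘ₗ TensorProduct.map (Coalgebra.comul (R := k) (A := A)) LinearMap.id := by
    rw [← TensorProduct.map_comp, ← TensorProduct.map_comp]
    simp [LinearMap.comp_assoc]
  have e2 : TensorProduct.map f (LinearMap.mul' k B ∘ₗ TensorProduct.map g h ∘ₗ (Coalgebra.comul (R := k) (A := A)))
      = TensorProduct.map LinearMap.id (LinearMap.mul' k B)
        ∘ₗ TensorProduct.map f (TensorProduct.map g h)
        ∘ₗ TensorProduct.map LinearMap.id (Coalgebra.comul (R := k) (A := A)) := by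
    rw [← TensorProduct.map_comp, ← TensorProduct.map_comp]
    simp [LinearMap.comp_assoc]
  have hco : (TensorProduct.assoc k A A A).toLinearMap
        ∘ₗ TensorProduct.map (Coalgebra.comul (R := k) (A := A)) LinearMap.id
        ∘ₗ (Coalgebra.comul (R := k) (A := A))
      = TensorProduct.map LinearMap.id (Coalgebra.comul (R := k) (A := A))
        ∘ₗ (Coalgebra.comul (R := k) (A := A)) := by
    simpa [LinearMap.rTensor, LinearMap.lTensor] using Coalgebra.coassoc (R := k) (A := A)
  simp only [conv, LinearMap.comp_assoc]
  rw [e1, e2]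
  simp only [← LinearMap.comp_assoc]
  rw [mul_assoc_tensor]
  simp only [LinearMap.comp_assoc]
  rw [hco]

lemma convUnit_conv (f : A →ₗ[k] B) : conv k (convUnit k) f = f := by
  have e1 : TensorProduct.map ((Algebra.linearMap k B) ∘ₗ (Coalgebra.counit (R := k) (A := A))) f
      = TensorProduct.map (Algebra.linearMap k B) f
        ∘ₗ TensorProduct.map (Coalgebra.counit (R := k) (A := A)) LinearMap.id := by
    rw [← TensorProduct.map_comp]; simp
  have e2 : TensorProduct.map (Coalgebra.counit (R := k) (A := A)) LinearMap.id
      ∘ₗ (Coalgebra.comul (R := k) (A := A)) = TensorProduct.mk k k A 1 := by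
    simpa [LinearMap.rTensor] using Coalgebra.rTensor_counit_comp_comul (R := k) (A := A)
  simp only [conv, convUnit, e1, LinearMap.comp_assoc, e2]
  ext a
  simp

lemma conv_convUnit (f : A →ₗ[k] B) : conv k f (convUnit k) = f := by
  have e1 : TensorProduct.map f ((Algebra.linearMap k B) ∘ₗ (Coalgebra.counit (R := k) (A := A)))
      = TensorProduct.map f (Algebra.linearMap k B)
        ∘ₗ TensorProduct.map LinearMap.id (Coalgebra.counit (R := k) (A := A)) := by
    rw [← TensorProduct.map_comp]; simp
  have e2 : TensorProduct.map LinearMap.id (Coalgebra.counit (R := k) (A := A))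
      ∘ₗ (Coalgebra.comul (R := k) (A := A)) = (TensorProduct.mk k A k).flip 1 := by
    simpa [LinearMap.lTensor] using Coalgebra.lTensor_counit_comp_comul (R := k) (A := A)
  simp only [conv, convUnit, e1, LinearMap.comp_assoc, e2]
  ext a
  simp

lemma algHom_comp_conv (ρ : C →ₐ[k] B) (f g : A →ₗ[k] C) :
    ρ.toLinearMap ∘ₗ conv k f g = conv k (ρ.toLinearMap ∘ₗ f) (ρ.toLinearMap ∘ₗ g) := by
  have e1 : ρ.toLinearMap ∘ₗ LinearMap.mul' k C
      = LinearMap.mul' k B ∘ₗ TensorProduct.map ρ.toLinearMap ρ.toLinearMap := by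
    apply TensorProduct.ext'; intro x y; simp
  simp only [conv, ← LinearMap.comp_assoc, e1]
  simp only [LinearMap.comp_assoc]
  congr 1
  rw [← LinearMap.comp_assoc, ← TensorProduct.map_comp]

lemma algHom_comp_convUnit (ρ : C →ₐ[k] B) :
    ρ.toLinearMap ∘ₗ convUnit k = (convUnit k : A →ₗ[k] B) := by
  ext a
  simp [convUnit, AlgHom.commutes]

lemma conv_antipode_id :
    conv k (HopfAlgebra.antipode (R := k) (A := A)) (LinearMap.id : A →ₗ[k] A)
      = convUnit k := by
  have := HopfAlgebra.mul_antipode_rTensor_comul (R := k) (A := A)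
  simpa [conv, convUnit, LinearMap.rTensor] using this

end tool

section lemmas

lemma conv_factor_F (Φ : A →ₗ[k] P) :
    conv k ((Algebra.TensorProduct.includeLeft : P →ₐ[k] P ⊗[k] A).toLinearMap ∘ₗ Φ)
      (Algebra.TensorProduct.includeRight : A →ₐ[k] P ⊗[k] A).toLinearMap
    = TensorProduct.map Φ LinearMap.id ∘ₗ (Coalgebra.comul (R := k) (A := A)) := by
  have e1 : TensorProduct.map
      ((Algebra.TensorProduct.includeLeft : P →ₐ[k] P ⊗[k] A).toLinearMap ∘ₗ Φ)
      (Algebra.TensorProduct.includeRight : A →ₐ[k] P ⊗[k] A).toLinearMap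
      = TensorProduct.map
          (Algebra.TensorProduct.includeLeft : P →ₐ[k] P ⊗[k] A).toLinearMap
          (Algebra.TensorProduct.includeRight : A →ₐ[k] P ⊗[k] A).toLinearMap
        ∘ₗ TensorProduct.map Φ LinearMap.id := by
    rw [← TensorProduct.map_comp]; simp
  have e2 : LinearMap.mul' k (P ⊗[k] A) ∘ₗ
      TensorProduct.map (Algebra.TensorProduct.includeLeft : P →ₐ[k] P ⊗[k] A).toLinearMap
        (Algebra.TensorProduct.includeRight : A →ₐ[k] P ⊗[k] A).toLinearMap
      = LinearMap.id := by
    apply TensorProduct.ext'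
    intro p a
    simp [Algebra.TensorProduct.tmul_mul_tmul]
  simp only [conv, e1, ← LinearMap.comp_assoc, e2]
  simp

lemma conv_factor_g (Ψ : A →ₗ[k] P) :
    conv k ((Algebra.TensorProduct.includeRight : A →ₐ[k] P ⊗[k] A).toLinearMap
        ∘ₗ HopfAlgebra.antipode (R := k) (A := A))
      ((Algebra.TensorProduct.includeLeft : P →ₐ[k] P ⊗[k] A).toLinearMap ∘ₗ Ψ)
    = TensorProduct.map Ψ (HopfAlgebra.antipode (R := k) (A := A)) ∘ₗ
        (TensorProduct.comm k A A).toLinearMap ∘ₗ (Coalgebra.comul (R := k) (A := A)) := by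
  have e1 : TensorProduct.map
      ((Algebra.TensorProduct.includeRight : A →ₐ[k] P ⊗[k] A).toLinearMap
        ∘ₗ HopfAlgebra.antipode (R := k) (A := A))
      ((Algebra.TensorProduct.includeLeft : P →ₐ[k] P ⊗[k] A).toLinearMap ∘ₗ Ψ)
      = TensorProduct.map
          (Algebra.TensorProduct.includeRight : A →ₐ[k] P ⊗[k] A).toLinearMap
          (Algebra.TensorProduct.includeLeft : P →ₐ[k] P ⊗[k] A).toLinearMap
        ∘ₗ TensorProduct.map (HopfAlgebra.antipode (R := k) (A := A)) Ψ := by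
    rw [← TensorProduct.map_comp]
  have e2 : LinearMap.mul' k (P ⊗[k] A) ∘ₗ
      TensorProduct.map (Algebra.TensorProduct.includeRight : A →ₐ[k] P ⊗[k] A).toLinearMap
        (Algebra.TensorProduct.includeLeft : P →ₐ[k] P ⊗[k] A).toLinearMap
      = (TensorProduct.comm k A P).toLinearMap := by
    apply TensorProduct.ext'
    intro a p
    simp [Algebra.TensorProduct.tmul_mul_tmul]
  have e3 : (TensorProduct.comm k A P).toLinearMap
      ∘ₗ TensorProduct.map (HopfAlgebra.antipode (R := k) (A := A)) Ψ
      = TensorProduct.map Ψ (HopfAlgebra.antipode (R := k) (A := A)) ∘ₗ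
          (TensorProduct.comm k A A).toLinearMap := by
    apply TensorProduct.ext'
    intro a b
    simp
  simp only [conv, e1, ← LinearMap.comp_assoc, e2, e3]

end lemmas

/-- if `Φ : A → P` is convolution invertible and right-covariant,
`Δ_R ∘ Φ = (Φ ⊗ id) ∘ Δ`, then its convolution inverse satisfies
`Δ_R(Φ⁻¹(a)) = Φ⁻¹(a₍₂₎) ⊗ S(a₍₁₎)`, i.e. `Δ_R ∘ Φ⁻¹ = (Φ⁻¹ ⊗ S) ∘ τ ∘ Δ`. -/
theorem stmt6 (ρ : P →ₐ[k] P ⊗[k] A)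
    (hcoassoc : (LinearMap.rTensor A ρ.toLinearMap) ∘ₗ ρ.toLinearMap =
      (TensorProduct.assoc k P A A).symm.toLinearMap ∘ₗ
        (LinearMap.lTensor P (Coalgebra.comul (R := k) (A := A))) ∘ₗ ρ.toLinearMap)
    (hcounit : (TensorProduct.rid k P).toLinearMap ∘ₗ
      (LinearMap.lTensor P (Coalgebra.counit (R := k) (A := A))) ∘ₗ ρ.toLinearMap =
        LinearMap.id)
    (Φ Ψ : A →ₗ[k] P)
    (hinv₁ : conv k Φ Ψ = convUnit k) (hinv₂ : conv k Ψ Φ = convUnit k)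
    (hΦ : ρ.toLinearMap ∘ₗ Φ =
      (TensorProduct.map Φ LinearMap.id) ∘ₗ (Coalgebra.comul (R := k) (A := A))) :
    ρ.toLinearMap ∘ₗ Ψ =
      (TensorProduct.map Ψ (HopfAlgebra.antipode (R := k) (A := A))) ∘ₗ
        (TensorProduct.comm k A A).toLinearMap ∘ₗ
          (Coalgebra.comul (R := k) (A := A)) := by
  set L := (Algebra.TensorProduct.includeLeft : P →ₐ[k] P ⊗[k] A) with hL
  set R := (Algebra.TensorProduct.includeRight : A →ₐ[k] P ⊗[k] A) with hR
  set S := HopfAlgebra.antipode (R := k) (A := A) with hS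
  -- F = ρ ∘ Φ factors as (L∘Φ) * R
  have hF : ρ.toLinearMap ∘ₗ Φ
      = conv k (L.toLinearMap ∘ₗ Φ) R.toLinearMap := by
    rw [hΦ, conv_factor_F]
  -- g factors as (R∘S) * (L∘Ψ)
  have hg : conv k (R.toLinearMap ∘ₗ S) (L.toLinearMap ∘ₗ Ψ)
      = TensorProduct.map Ψ S ∘ₗ (TensorProduct.comm k A A).toLinearMap ∘ₗ
          (Coalgebra.comul (R := k) (A := A)) := conv_factor_g k Ψ
  -- (L∘Ψ) * (L∘Φ) = unit
  have h5 : conv k (L.toLinearMap ∘ₗ Ψ) (L.toLinearMap ∘ₗ Φ) = convUnit k := by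
    rw [← algHom_comp_conv, hinv₂, algHom_comp_convUnit]
  -- (R∘S) * R = unit
  have hRS : conv k (R.toLinearMap ∘ₗ S) R.toLinearMap = convUnit k := by
    have h1 : R.toLinearMap = R.toLinearMap ∘ₗ (LinearMap.id : A →ₗ[k] A) := by
      rw [LinearMap.comp_id]
    calc conv k (R.toLinearMap ∘ₗ S) R.toLinearMap
        = conv k (R.toLinearMap ∘ₗ S) (R.toLinearMap ∘ₗ LinearMap.id) := by rw [← h1]
      _ = R.toLinearMap ∘ₗ conv k S LinearMap.id := (algHom_comp_conv k R S LinearMap.id).symm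
      _ = R.toLinearMap ∘ₗ convUnit k := by rw [hS, conv_antipode_id]
      _ = convUnit k := algHom_comp_convUnit k R
  -- g * (ρ∘Φ) = unit
  have hgF : conv k (conv k (R.toLinearMap ∘ₗ S) (L.toLinearMap ∘ₗ Ψ))
      (ρ.toLinearMap ∘ₗ Φ) = convUnit k := by
    rw [hF, conv_assoc, ← conv_assoc k (L.toLinearMap ∘ₗ Ψ), h5, convUnit_conv, hRS]
  -- (ρ∘Φ) * (ρ∘Ψ) = unit
  have hFG : conv k (ρ.toLinearMap ∘ₗ Φ) (ρ.toLinearMap ∘ₗ Ψ) = convUnit k := by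
    rw [← algHom_comp_conv, hinv₁, algHom_comp_convUnit]
  calc ρ.toLinearMap ∘ₗ Ψ
      = conv k (convUnit k) (ρ.toLinearMap ∘ₗ Ψ) := (convUnit_conv k _).symm
    _ = conv k (conv k (conv k (R.toLinearMap ∘ₗ S) (L.toLinearMap ∘ₗ Ψ))
          (ρ.toLinearMap ∘ₗ Φ)) (ρ.toLinearMap ∘ₗ Ψ) := by rw [hgF]
    _ = conv k (conv k (R.toLinearMap ∘ₗ S) (L.toLinearMap ∘ₗ Ψ))
          (conv k (ρ.toLinearMap ∘ₗ Φ) (ρ.toLinearMap ∘ₗ Ψ)) := conv_assoc k _ _ _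
    _ = conv k (conv k (R.toLinearMap ∘ₗ S) (L.toLinearMap ∘ₗ Ψ)) (convUnit k) := by rw [hFG]
    _ = conv k (R.toLinearMap ∘ₗ S) (L.toLinearMap ∘ₗ Ψ) := conv_convUnit k _
    _ = _ := hg
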